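/- Let H be a finite simple graph with vertex set {1,…,N} and let C be a set of l ≥ 1 distinct edges of H. If C is not an l-star and C is not a triangle, then cost(C) ≥ l − 1/2. -/

import Mathlib

open SimpleGraph Finset

/-- For a graph on vertex set `Fin N`, the edge `e = {i, j}` is identified with the
point `x_e = b_i + b_j` in `ℝ^N`, where `b_i` is the `i`-th standard basis vector. -/
noncomputable def edgePoint (N : ℕ) (e : Sym2 (Fin N)) : EuclideanSpace ℝ (Fin N) :=
  Sym2.lift ⟨fun i j => EuclideanSpace.single i (1 : ℝ) + EuclideanSpace.single j (1 : ℝ),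
    fun _ _ => add_comm _ _⟩ e

/-- The (k-means) cost of a finite set `C` of edges:
`cost(C) = inf_{c ∈ ℝ^N} Σ_{e ∈ C} ‖x_e − c‖²`. -/
noncomputable def cost (N : ℕ) (C : Finset (Sym2 (Fin N))) : ℝ :=
  ⨅ c : EuclideanSpace ℝ (Fin N), ∑ e ∈ C, ‖edgePoint N e - c‖ ^ 2

/-- A star is a set of distinct edges all incident to a common vertex. -/
def IsStar {N : ℕ} (C : Finset (Sym2 (Fin N))) : Prop :=
  ∃ v : Fin N, ∀ e ∈ C, v ∈ e

/-- A triangle is the set of the three edges `{u,v}, {v,w}, {u,w}` on three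
distinct vertices `u, v, w`. -/
def IsTriangle {N : ℕ} (C : Finset (Sym2 (Fin N))) : Prop :=
  ∃ u v w : Fin N, u ≠ v ∧ u ≠ w ∧ v ≠ w ∧ C = {s(u, v), s(v, w), s(u, w)}


/-!
Write `L = #C` and `s = ∑ x_e`. For every centre `c`,
`L · ∑ ‖x_e - c‖² = L · ∑ ‖x_e‖² - ‖s‖² + ‖L c - s‖² ≥ 2L² - ‖s‖²`.
In the Gram expansion of `‖s‖²`, distinct edges have inner product 1 if they share a vertex and
0 otherwise, so the row of an edge sums to at most `L`, or `L + 1` if the edge meets every edge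
of `C`. Hence `‖s‖² ≤ L² + K`, with `K` the number of such universal edges, and it remains to
show `2K ≤ L`. If two edges `va`, `vb` are universal, an edge avoiding `v` (there is one, `C` not
being a star) must be `ab`; since `C` is not this triangle it has a fourth edge, which then does
not meet `ab`, so `K ≤ 2` while `L ≥ 4`.
-/

section Meets

variable {α : Type*}

def Meets (e f : Sym2 α) : Prop := ∃ v, v ∈ e ∧ v ∈ f

lemma meets_refl (e : Sym2 α) : Meets e e := by
  induction e using Sym2.inductionOn with
  | hf i j => exact ⟨i, Sym2.mem_mk_left i j, Sym2.mem_mk_left i j⟩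

lemma Meets.symm {e f : Sym2 α} (h : Meets e f) : Meets f e :=
  let ⟨v, he, hf⟩ := h
  ⟨v, hf, he⟩

lemma Meets.mem_of_notMem {e : Sym2 α} {v w : α} (h : Meets s(v, w) e) (hv : v ∉ e) :
    w ∈ e := by
  obtain ⟨x, hx, hxe⟩ := h
  rcases Sym2.mem_iff.mp hx with rfl | rfl
  · exact absurd hxe hv
  · exact hxe

lemma exists_eq_of_meets {e f : Sym2 α} (he : ¬ e.IsDiag) (hf : ¬ f.IsDiag) (hne : e ≠ f)
    (h : Meets e f) : ∃ v a b, v ≠ a ∧ v ≠ b ∧ a ≠ b ∧ e = s(v, a) ∧ f = s(v, b) := by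
  obtain ⟨v, hve, hvf⟩ := h
  obtain ⟨a, rfl⟩ := Sym2.mem_iff_exists.mp hve
  obtain ⟨b, rfl⟩ := Sym2.mem_iff_exists.mp hvf
  rw [Sym2.mk_isDiag_iff] at he hf
  exact ⟨v, a, b, he, hf, fun hab => hne (hab ▸ rfl), rfl, rfl⟩

variable [DecidableEq α]

def triangleEdges (u v w : α) : Finset (Sym2 α) := {s(u, v), s(v, w), s(u, w)}

lemma card_triangleEdges {u v w : α} (huv : u ≠ v) (huw : u ≠ w) (hvw : v ≠ w) :
    #(triangleEdges u v w) = 3 :=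
  card_eq_three.mpr ⟨_, _, _, by simp [huw, hvw], by simp [huw, hvw], by simp [huv.symm, hvw], rfl⟩

lemma mem_triangleEdges_of_meets {u v w : α} (huv : u ≠ v) (huw : u ≠ w) (hvw : v ≠ w)
    {e : Sym2 α} (h : ∀ f ∈ triangleEdges u v w, Meets e f) : e ∈ triangleEdges u v w := by
  by_cases hu : u ∈ e
  · obtain ⟨x, rfl⟩ := Sym2.mem_iff_exists.mp hu
    have hx : x ∈ s(v, w) :=
      (h _ (by simp [triangleEdges])).mem_of_notMem (by simp [huv, huw])
    rcases Sym2.mem_iff.mp hx with rfl | rfl <;> simp [triangleEdges]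
  · have hv := (h s(u, v) (by simp [triangleEdges])).symm.mem_of_notMem hu
    have hw := (h s(u, w) (by simp [triangleEdges])).symm.mem_of_notMem hu
    simp [triangleEdges, (Sym2.mem_and_mem_iff hvw).mp ⟨hv, hw⟩]

end Meets

section Combinatorics

variable {N : ℕ} {C : Finset (Sym2 (Fin N))}

open Classical in
noncomputable def universalEdges (C : Finset (Sym2 (Fin N))) : Finset (Sym2 (Fin N)) :=
  C.filter fun e => ∀ f ∈ C, Meets e f

lemma mem_universalEdges {e : Sym2 (Fin N)} :
    e ∈ universalEdges C ↔ e ∈ C ∧ ∀ f ∈ C, Meets e f := by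
  simp [universalEdges]

lemma universalEdges_subset : universalEdges C ⊆ C := fun _ he => (mem_universalEdges.mp he).1

lemma one_lt_card_of_not_isStar (hne : C.Nonempty) (hstar : ¬ IsStar C) : 1 < #C := by
  obtain ⟨e, rfl⟩ | hC := hne.exists_eq_singleton_or_nontrivial
  · induction e using Sym2.inductionOn with
    | hf a b => exact absurd ⟨a, by simp⟩ hstar
  · exact one_lt_card_iff_nontrivial.mpr hC

lemma exists_triangleEdges_subset (hdiag : ∀ e ∈ C, ¬ e.IsDiag) (hstar : ¬ IsStar C)
    {e f : Sym2 (Fin N)} (he : e ∈ universalEdges C) (hf : f ∈ universalEdges C) (hne : e ≠ f) :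
    ∃ v a b, v ≠ a ∧ v ≠ b ∧ a ≠ b ∧ e = s(v, a) ∧ f = s(v, b) ∧
      triangleEdges v a b ⊆ C := by
  rw [mem_universalEdges] at he hf
  obtain ⟨v, a, b, hva, hvb, hab, rfl, rfl⟩ :=
    exists_eq_of_meets (hdiag _ he.1) (hdiag _ hf.1) hne (he.2 _ hf.1)
  obtain ⟨g, hg, hvg⟩ : ∃ g ∈ C, v ∉ g := by
    by_contra! h
    exact hstar ⟨v, h⟩
  have hga : a ∈ g := (he.2 g hg).mem_of_notMem hvg
  have hgb : b ∈ g := (hf.2 g hg).mem_of_notMem hvg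
  refine ⟨v, a, b, hva, hvb, hab, rfl, rfl, ?_⟩
  simp only [triangleEdges, insert_subset_iff, singleton_subset_iff]
  exact ⟨he.1, (Sym2.mem_and_mem_iff hab).mp ⟨hga, hgb⟩ ▸ hg, hf.1⟩

lemma two_mul_card_universalEdges_le (hdiag : ∀ e ∈ C, ¬ e.IsDiag) (hstar : ¬ IsStar C)
    (htri : ¬ IsTriangle C) : 2 * #(universalEdges C) ≤ #C := by
  rcases le_or_gt #(universalEdges C) 1 with hU | hU
  · rcases (universalEdges C).eq_empty_or_nonempty with h | h
    · simp [h]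
    · have := one_lt_card_of_not_isStar (h.mono universalEdges_subset) hstar
      omega
  obtain ⟨e, he, f, hf, hne⟩ := one_lt_card.mp hU
  obtain ⟨v, a, b, hva, hvb, hab, rfl, rfl, hTC⟩ :=
    exists_triangleEdges_subset hdiag hstar he hf hne
  have hT : #(triangleEdges v a b) = 3 := card_triangleEdges hva hvb hab
  have hTU : ∀ g ∈ universalEdges C, g ∈ triangleEdges v a b := fun g hg =>
    mem_triangleEdges_of_meets hva hvb hab fun h hh => (mem_universalEdges.mp hg).2 h (hTC hh)
  have hab_notMem : s(a, b) ∉ universalEdges C := by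
    intro habU
    refine htri ⟨v, a, b, hva, hvb, hab, subset_antisymm (fun g hg => ?_) hTC⟩
    refine mem_triangleEdges_of_meets hva hvb hab fun h hh => ?_
    simp only [triangleEdges, mem_insert, mem_singleton] at hh
    rcases hh with rfl | rfl | rfl
    exacts [((mem_universalEdges.mp he).2 g hg).symm, ((mem_universalEdges.mp habU).2 g hg).symm,
      ((mem_universalEdges.mp hf).2 g hg).symm]
  have hUT : universalEdges C ⊆ (triangleEdges v a b).erase s(a, b) := fun g hg =>
    mem_erase.mpr ⟨fun h => hab_notMem (h ▸ hg), hTU g hg⟩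
  have hTC' : triangleEdges v a b ⊂ C :=
    hTC.ssubset_of_ne fun h => htri ⟨v, a, b, hva, hvb, hab, h.symm⟩
  have h1 := card_le_card hUT
  have h2 := card_lt_card hTC'
  rw [card_erase_of_mem (by simp [triangleEdges])] at h1
  omega

end Combinatorics

open scoped InnerProductSpace

lemma card_mul_sum_norm_sub_sq {ι E : Type*} [NormedAddCommGroup E] [InnerProductSpace ℝ E]
    (s : Finset ι) (x : ι → E) (c : E) :
    #s * ∑ i ∈ s, ‖x i - c‖ ^ 2 =
      #s * ∑ i ∈ s, ‖x i‖ ^ 2 - ‖∑ i ∈ s, x i‖ ^ 2 + ‖(#s : ℝ) • c - ∑ i ∈ s, x i‖ ^ 2 := by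
  simp only [norm_sub_sq_real, sum_add_distrib, sum_sub_distrib, inner_sum, sum_const,
    nsmul_eq_mul, ← mul_sum, norm_smul, real_inner_smul_left, Real.norm_natCast,
    real_inner_comm c]
  ring

lemma card_mul_sum_norm_sq_sub_le {ι E : Type*} [NormedAddCommGroup E] [InnerProductSpace ℝ E]
    (s : Finset ι) (x : ι → E) (c : E) :
    #s * ∑ i ∈ s, ‖x i‖ ^ 2 - ‖∑ i ∈ s, x i‖ ^ 2 ≤ #s * ∑ i ∈ s, ‖x i - c‖ ^ 2 := by
  rw [card_mul_sum_norm_sub_sq]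
  exact le_add_of_nonneg_right (sq_nonneg _)

section EdgePoint

variable {N : ℕ}

lemma edgePoint_mk (i j : Fin N) :
    edgePoint N s(i, j) = EuclideanSpace.single i 1 + EuclideanSpace.single j 1 := rfl

lemma inner_edgePoint_mk (i j k m : Fin N) :
    ⟪edgePoint N s(i, j), edgePoint N s(k, m)⟫_ℝ =
      (if i = k then 1 else 0) + (if j = k then 1 else 0) +
        ((if i = m then 1 else 0) + (if j = m then 1 else 0)) := by
  simp [edgePoint_mk, inner_add_left, inner_add_right, EuclideanSpace.inner_single_left,
    PiLp.single_apply]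

lemma norm_edgePoint_sq {e : Sym2 (Fin N)} (he : ¬ e.IsDiag) : ‖edgePoint N e‖ ^ 2 = 2 := by
  induction e using Sym2.inductionOn with | hf i j =>
  rw [Sym2.mk_isDiag_iff] at he
  rw [← real_inner_self_eq_norm_sq, inner_edgePoint_mk]
  norm_num [he, Ne.symm he]

lemma inner_edgePoint_le_one {e f : Sym2 (Fin N)} (he : ¬ e.IsDiag) (hf : ¬ f.IsDiag)
    (hne : e ≠ f) : ⟪edgePoint N e, edgePoint N f⟫_ℝ ≤ 1 := by
  induction e using Sym2.inductionOn with | hf i j =>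
  induction f using Sym2.inductionOn with | hf k m =>
  rw [Sym2.mk_isDiag_iff] at he hf
  rw [ne_eq, Sym2.eq_iff] at hne
  rw [inner_edgePoint_mk]
  split_ifs <;> simp_all

lemma inner_edgePoint_eq_zero {e f : Sym2 (Fin N)} (h : ¬ Meets e f) :
    ⟪edgePoint N e, edgePoint N f⟫_ℝ = 0 := by
  induction e using Sym2.inductionOn with | hf i j =>
  induction f using Sym2.inductionOn with | hf k m =>
  simp only [Meets, Sym2.mem_iff, not_exists, not_and, not_or] at h
  rw [inner_edgePoint_mk]
  simp_all

end EdgePoint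

section Cost

variable {N : ℕ} {C : Finset (Sym2 (Fin N))}

lemma sum_inner_edgePoint_le (hdiag : ∀ e ∈ C, ¬ e.IsDiag) {e : Sym2 (Fin N)} (he : e ∈ C) :
    ∑ f ∈ C, ⟪edgePoint N e, edgePoint N f⟫_ℝ ≤ #C + if e ∈ universalEdges C then 1 else 0 := by
  have hle : ∀ s ⊆ C.erase e, ∑ f ∈ s, ⟪edgePoint N e, edgePoint N f⟫_ℝ ≤ #s := fun s hs => by
    simpa using sum_le_card_nsmul s _ 1 fun f hf =>
      inner_edgePoint_le_one (hdiag e he) (hdiag f (mem_of_mem_erase (hs hf)))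
        (ne_of_mem_erase (hs hf)).symm
  have hcard : (#(C.erase e) : ℝ) + 1 = #C := by exact_mod_cast card_erase_add_one he
  rw [← add_sum_erase C _ he, real_inner_self_eq_norm_sq, norm_edgePoint_sq (hdiag e he)]
  by_cases hU : e ∈ universalEdges C
  · have := hle _ subset_rfl
    rw [if_pos hU]
    linarith
  · obtain ⟨g, hg, hmeet⟩ : ∃ g ∈ C, ¬ Meets e g := by
      simpa [mem_universalEdges, he] using hU
    have hg' : g ∈ C.erase e := mem_erase.mpr ⟨fun h => hmeet (h ▸ meets_refl e), hg⟩
    have := hle _ (erase_subset g _)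
    have hcard' : (#((C.erase e).erase g) : ℝ) + 1 = #(C.erase e) := by
      exact_mod_cast card_erase_add_one hg'
    rw [← add_sum_erase _ _ hg', inner_edgePoint_eq_zero hmeet, if_neg hU]
    linarith

lemma norm_sum_edgePoint_sq_le (hdiag : ∀ e ∈ C, ¬ e.IsDiag) :
    ‖∑ e ∈ C, edgePoint N e‖ ^ 2 ≤ #C ^ 2 + #(universalEdges C) := by
  rw [← real_inner_self_eq_norm_sq, sum_inner]
  calc ∑ e ∈ C, ⟪edgePoint N e, ∑ f ∈ C, edgePoint N f⟫_ℝ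
      = ∑ e ∈ C, ∑ f ∈ C, ⟪edgePoint N e, edgePoint N f⟫_ℝ := by simp only [inner_sum]
    _ ≤ ∑ e ∈ C, ((#C : ℝ) + if e ∈ universalEdges C then 1 else 0) :=
      sum_le_sum fun e he => sum_inner_edgePoint_le hdiag he
    _ = #C ^ 2 + #(universalEdges C) := by
      rw [sum_add_distrib, sum_ite_mem, inter_eq_right.mpr universalEdges_subset]
      simp [sq]

lemma card_sub_half_le_cost (hdiag : ∀ e ∈ C, ¬ e.IsDiag)
    (hU : 2 * #(universalEdges C) ≤ #C) : (#C : ℝ) - 1 / 2 ≤ cost N C := by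
  refine le_ciInf fun c => ?_
  rcases C.eq_empty_or_nonempty with rfl | hne
  · norm_num
  have hpos : (0 : ℝ) < #C := by exact_mod_cast hne.card_pos
  have hU' : (2 * #(universalEdges C) : ℝ) ≤ #C := by exact_mod_cast hU
  have hvar := card_mul_sum_norm_sq_sub_le C (edgePoint N) c
  rw [sum_congr rfl fun e he => norm_edgePoint_sq (hdiag e he), sum_const, nsmul_eq_mul] at hvar
  have hgram := norm_sum_edgePoint_sq_le hdiag
  refine le_of_mul_le_mul_left ?_ hpos
  linarith

end Cost

theorem statement8_general {N : ℕ} (H : SimpleGraph (Fin N)) (C : Finset (Sym2 (Fin N)))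
    (hC : ↑C ⊆ H.edgeSet) (l : ℕ) (hl : C.card = l)
    (hstar : ¬ IsStar C) (htri : ¬ IsTriangle C) :
    (l : ℝ) - 1 / 2 ≤ cost N C := by
  have hdiag : ∀ e ∈ C, ¬ e.IsDiag := fun e he => H.not_isDiag_of_mem_edgeSet (hC he)
  subst hl
  exact card_sub_half_le_cost hdiag (two_mul_card_universalEdges_le hdiag hstar htri)

/-- For a set `C` of `l ≥ 1` distinct edges of a finite simple graph `H`
on vertex set `{1, …, N}`, if `C` is neither an `l`-star nor a triangle, then
`cost(C) ≥ l − 1/2`. -/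
theorem statement8 {N : ℕ} (H : SimpleGraph (Fin N)) (C : Finset (Sym2 (Fin N)))
    (hC : ↑C ⊆ H.edgeSet) (l : ℕ) (hl : C.card = l) (hl1 : 1 ≤ l)
    (hstar : ¬ IsStar C) (htri : ¬ IsTriangle C) :
    (l : ℝ) - 1 / 2 ≤ cost N C :=
  statement8_general H C hC l hl hstar htri
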